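/- arXiv:1406.1083 — 3 statements merged into one kernel-verified Lean document; each statement's English description precedes it below -/
import Mathlib

section
/- Let x_k be a zero of the Jacobi polynomial P_n^{(α,β)} with x_k ∈ (−1,1), and define M_{k,r} = (P_n^{(α,β)})^{(r+1)}(x_k) / ((r+1)! · (P_n^{(α,β)})'(x_k)). Then M_{k,0} = 1, M_{k,1} = (α − β + (α+β+2)x_k)/(2(1−x_k²)), and for r ≥ 1, M_{k,r+1} = [((α+β+2(r+1))x_k + α − β)/((1−x_k²)(r+2))] M_{k,r} + [(r(α+β+r+1) − n(n+α+β+1))/((1−x_k²)(r+2)(r+1))] M_{k,r−1}. -/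
open Polynomial

/-!
Differentiating the Jacobi equation `(1 - X²) P'' + (β - α - (α + β + 2) X) P' + λ P = 0`
`r` times gives the same kind of equation for `P⁽ʳ⁾`, with the coefficient of `X` shifted by
`2r` and `λ` lowered by `r (r + α + β + 1)`. Evaluated at `x`, it is a three-term recurrence
between the Taylor coefficients of `P` at `x`, and `M r` is the ratio of the `(r+1)`-st to the
first of them. As `P x = 0`, the constant coefficient drops out of the recurrence at `r = 0`,
which gives `M 1`.
-/

theorem iterate_derivative_jacobi_ode {R : Type*} [CommRing R] {a b l : R} {P : R[X]}
    (hP : (1 - X ^ 2) * derivative (derivative P) + (C a - C b * X) * derivative P +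
      C l * P = 0) (r : ℕ) :
    (1 - X ^ 2) * derivative (derivative (derivative^[r] P)) +
      (C a - C (b + 2 * r) * X) * derivative (derivative^[r] P) +
      C (l - r * (r + b - 1)) * derivative^[r] P = 0 := by
  induction r with
  | zero => simpa using hP
  | succ m ih =>
    have h := congrArg derivative ih
    simp only [derivative_add, derivative_mul, derivative_sub, derivative_one,
      derivative_X, derivative_C, derivative_X_pow, derivative_zero] at h
    simp only [Function.iterate_succ_apply', C_add, C_sub, C_mul, map_natCast, Nat.cast_succ,
      C_1, map_ofNat] at h ⊢
    linear_combination h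

theorem eval_iterate_derivative_eq_factorial_mul_taylor_coeff {R : Type*} [CommRing R]
    (P : R[X]) (x : R) (j : ℕ) :
    (derivative^[j] P).eval x = j.factorial * (taylor x P).coeff j := by
  rw [← factorial_smul_hasseDeriv, taylor_coeff, LinearMap.smul_apply, eval_smul, nsmul_eq_mul]

theorem taylor_coeff_jacobi_recurrence {K : Type*} [Field K] [CharZero K] {a b l : K}
    {P : K[X]} (hP : (1 - X ^ 2) * derivative (derivative P) + (C a - C b * X) * derivative P +
      C l * P = 0) (x : K) (r : ℕ) :
    (1 - x ^ 2) * ((r + 2) * (r + 1)) * (taylor x P).coeff (r + 2) +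
      (a - (b + 2 * r) * x) * (r + 1) * (taylor x P).coeff (r + 1) +
      (l - r * (r + b - 1)) * (taylor x P).coeff r = 0 := by
  have h := congrArg (eval x) (iterate_derivative_jacobi_ode hP r)
  simp only [eval_add, eval_mul, eval_sub, eval_one, eval_X, eval_pow, eval_C, eval_zero,
    ← Function.iterate_succ_apply' derivative,
    eval_iterate_derivative_eq_factorial_mul_taylor_coeff, Nat.factorial_succ] at h
  have hr : (r.factorial : K) ≠ 0 := by exact_mod_cast r.factorial_ne_zero
  apply mul_left_cancel₀ hr
  push_cast at h
  linear_combination h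

theorem stmt_6_general (n : ℕ) (α β : ℝ) (P : Polynomial ℝ)
    (hP : (1 - X ^ 2) * derivative (derivative P) +
        (C (β - α) - C (α + β + 2) * X) * derivative P +
        C ((n : ℝ) * ((n : ℝ) + α + β + 1)) * P = 0)
    (xk : ℝ) (hroot : P.eval xk = 0) (hmem : xk ∈ Set.Ioo (-1 : ℝ) 1)
    (hP' : (derivative P).eval xk ≠ 0)
    (M : ℕ → ℝ)
    (hM : ∀ r, M r = (derivative^[r + 1] P).eval xk /
      ((Nat.factorial (r + 1) : ℝ) * (derivative P).eval xk)) :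
    M 0 = 1 ∧
      M 1 = (α - β + (α + β + 2) * xk) / (2 * (1 - xk ^ 2)) ∧
      ∀ r : ℕ, 1 ≤ r →
        M (r + 1) =
          ((α + β + 2 * ((r : ℝ) + 1)) * xk + α - β) / ((1 - xk ^ 2) * ((r : ℝ) + 2)) * M r +
            ((r : ℝ) * (α + β + (r : ℝ) + 1) - (n : ℝ) * ((n : ℝ) + α + β + 1)) /
              ((1 - xk ^ 2) * ((r : ℝ) + 2) * ((r : ℝ) + 1)) * M (r - 1) := by
  have hx : 1 - xk ^ 2 ≠ 0 := by nlinarith [hmem.1, hmem.2]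
  have hc0 : (taylor xk P).coeff 0 = 0 := by rwa [taylor_coeff_zero]
  have hc1 : (taylor xk P).coeff 1 ≠ 0 := by rwa [taylor_coeff_one]
  have hMc : ∀ r, M r = (taylor xk P).coeff (r + 1) / (taylor xk P).coeff 1 := fun r => by
    rw [hM, eval_iterate_derivative_eq_factorial_mul_taylor_coeff, ← taylor_coeff_one]
    have hfac := (r + 1).factorial_ne_zero
    field_simp
  have hrec := taylor_coeff_jacobi_recurrence hP xk
  refine ⟨by rw [hMc, div_self hc1], ?_, fun r hr => ?_⟩
  · have h0 := hrec 0
    rw [hc0] at h0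
    rw [hMc, one_add_one_eq_two]
    field_simp
    push_cast at h0
    linear_combination h0
  · obtain ⟨m, rfl⟩ := Nat.exists_eq_add_of_le' hr
    simp only [hMc, Nat.add_sub_cancel]
    field_simp
    have h := hrec (m + 1)
    push_cast at h ⊢
    linear_combination h

/-- Let `P = P_n^{(α,β)}` (characterized by the Jacobi differential equation),
`x_k ∈ (−1,1)` a zero of `P` with `P'(x_k) ≠ 0`, and
`M_r = P^{(r+1)}(x_k)/((r+1)! P'(x_k))`. Then `M_0 = 1`,
`M_1 = (α−β+(α+β+2)x_k)/(2(1−x_k²))`, and the stated three-term recursion holds for `r ≥ 1`. -/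
theorem stmt_6 (n : ℕ) (α β : ℝ) (hα : -1 < α) (hβ : -1 < β) (P : Polynomial ℝ)
    (hP : (1 - X ^ 2) * derivative (derivative P) +
        (C (β - α) - C (α + β + 2) * X) * derivative P +
        C ((n : ℝ) * ((n : ℝ) + α + β + 1)) * P = 0)
    (xk : ℝ) (hroot : P.eval xk = 0) (hmem : xk ∈ Set.Ioo (-1 : ℝ) 1)
    (hP' : (derivative P).eval xk ≠ 0)
    (M : ℕ → ℝ)
    (hM : ∀ r, M r = (derivative^[r + 1] P).eval xk /
      ((Nat.factorial (r + 1) : ℝ) * (derivative P).eval xk)) :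
    M 0 = 1 ∧
      M 1 = (α - β + (α + β + 2) * xk) / (2 * (1 - xk ^ 2)) ∧
      ∀ r : ℕ, 1 ≤ r →
        M (r + 1) =
          ((α + β + 2 * ((r : ℝ) + 1)) * xk + α - β) / ((1 - xk ^ 2) * ((r : ℝ) + 2)) * M r +
            ((r : ℝ) * (α + β + (r : ℝ) + 1) - (n : ℝ) * ((n : ℝ) + α + β + 1)) /
              ((1 - xk ^ 2) * ((r : ℝ) + 2) * ((r : ℝ) + 1)) * M (r - 1) :=
  stmt_6_general n α β P hP xk hroot hmem hP' M hM
end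

section
/- For the Chebyshev points of the first kind x_k = cos((2k−1)π/(2n)), k = 1,...,n (zeros of the Chebyshev polynomial T_n, i.e., of P_n^{(−1/2,−1/2)} up to normalization), the function v_k(x) = 1 − (x−x_k)·ω_n''(x_k)/ω_n'(x_k) with ω_n(x) = Π_j(x−x_j) satisfies v_k(x) ≥ 0 for all x ∈ [−1,1] and all k, i.e., the Chebyshev pointsystem of the first kind is normal. -/
open Polynomial

open Real in

lemma chebT_aux (k : ℕ) : (Polynomial.Chebyshev.T ℝ k).natDegree ≤ k ∧
    (Polynomial.Chebyshev.T ℝ (k+1)).natDegree ≤ k+1 ∧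
    (Polynomial.Chebyshev.T ℝ (k+1)).coeff (k+1) = 2^k := by
  induction k with
  | zero =>
    norm_num [Polynomial.Chebyshev.T_zero, Polynomial.Chebyshev.T_one]
  | succ k ih =>
    obtain ⟨h0, h1, h2⟩ := ih
    have hrec : Polynomial.Chebyshev.T ℝ ((k:ℤ)+2) =
        2 * X * Polynomial.Chebyshev.T ℝ ((k:ℤ)+1) - Polynomial.Chebyshev.T ℝ k :=
      Polynomial.Chebyshev.T_add_two ℝ k
    have hcast : ((k:ℤ)+2) = ((k+1 : ℕ) : ℤ) + 1 := by push_cast; ring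
    rw [hcast] at hrec
    have hC : (2 * X * Polynomial.Chebyshev.T ℝ ((k:ℤ)+1) : ℝ[X])
        = C 2 * (X * Polynomial.Chebyshev.T ℝ ((k:ℤ)+1)) := by
      rw [show ((2:ℝ[X])) = C 2 from by norm_cast, mul_assoc]
    refine ⟨h1, ?_, ?_⟩
    · rw [hrec]
      refine le_trans (natDegree_sub_le _ _) (max_le ?_ (le_trans h0 (by omega)))
      rw [hC, show ((k:ℤ)+1) = ((k+1:ℕ):ℤ) by push_cast; ring]
      refine le_trans (natDegree_C_mul_le _ _) (le_trans (natDegree_mul_le) ?_)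
      calc natDegree (X:ℝ[X]) + _ ≤ 1 + (k+1) := by gcongr <;> simp [h1] <;> omega
        _ = k+1+1 := by omega
    · rw [hrec, coeff_sub, hC, coeff_C_mul, coeff_X_mul, h2,
        coeff_eq_zero_of_natDegree_lt (by omega : (Polynomial.Chebyshev.T ℝ k).natDegree < k+1+1)]
      ring

open Real in

set_option maxHeartbeats 1000000 in
/-- For the Chebyshev points of the first kind `x_k = cos((2k−1)π/(2n))`,
the functions `v_k(x) = 1 − (x−x_k) ω''(x_k)/ω'(x_k)` (with `ω(x) = Π_j (x−x_j)`)
satisfy `v_k(x) ≥ 0` for all `x ∈ [−1,1]` and all `k`; i.e. the Chebyshev pointsystem of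
the first kind is normal in the sense of Fejér. -/
theorem stmt_9 (n : ℕ) (hn : 1 ≤ n) (x : Fin n → ℝ)
    (hx : ∀ k : Fin n, x k = Real.cos ((2 * (k : ℕ) + 1) * Real.pi / (2 * n)))
    (ω : Polynomial ℝ) (hω : ω = ∏ j, (X - C (x j)))
    (v : Fin n → ℝ → ℝ)
    (hv : ∀ k t, v k t = 1 - (t - x k) *
      ((derivative^[2] ω).eval (x k) / (derivative ω).eval (x k))) :
    ∀ k : Fin n, ∀ t ∈ Set.Icc (-1 : ℝ) 1, 0 ≤ v k t := by
  have hnR : (0:ℝ) < n := by exact_mod_cast hn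
  set θ : Fin n → ℝ := fun k => (2 * (k : ℕ) + 1) * Real.pi / (2 * n) with hθ
  have hxθ : ∀ k, x k = Real.cos (θ k) := hx
  have hnθ : ∀ k : Fin n, (n : ℝ) * θ k = (k : ℕ) * π + π / 2 := by
    intro k
    rw [hθ]
    field_simp
  have hcosn : ∀ k : Fin n, Real.cos ((n:ℝ) * θ k) = 0 := by
    intro k
    rw [hnθ, Real.cos_add]
    simp [Real.sin_nat_mul_pi]
  have hsinn2 : ∀ k : Fin n, Real.sin ((n:ℝ) * θ k) ^ 2 = 1 := by
    intro k
    have := Real.sin_sq_add_cos_sq ((n:ℝ) * θ k)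
    rw [hcosn k] at this
    linarith
  have hθmem : ∀ k : Fin n, θ k ∈ Set.Icc 0 π := by
    intro k
    constructor
    · rw [hθ]; positivity
    · rw [hθ]
      rw [div_le_iff₀ (by positivity)]
      have hk : (k : ℕ) < n := k.2
      have : (2 * (k:ℕ) + 1 : ℝ) ≤ 2 * n := by
        have : (2 * (k:ℕ) + 1 : ℕ) ≤ 2 * n := by omega
        exact_mod_cast this
      have := mul_le_mul_of_nonneg_right this Real.pi_pos.le
      linarith
  have hxinj : Function.Injective x := by
    intro k l hkl
    rw [hxθ k, hxθ l] at hkl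
    have hθeq := Real.injOn_cos (hθmem k) (hθmem l) hkl
    rw [hθ] at hθeq
    simp only at hθeq
    field_simp at hθeq
    have h : ((k:ℕ):ℝ) = (l:ℕ) := by linarith
    exact Fin.ext (by exact_mod_cast h)
  have hωmonic : ω.Monic := by
    rw [hω]; exact monic_prod_of_monic _ _ (fun j _ => monic_X_sub_C _)
  have hωdeg : ω.natDegree = n := by
    rw [hω, natDegree_prod _ _ (fun j _ => X_sub_C_ne_zero _)]
    simp
  obtain ⟨m, rfl⟩ : ∃ m, n = m + 1 := ⟨n - 1, by omega⟩
  set c : ℝ := 2 ^ m with hc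
  have hcpos : (0:ℝ) < c := by positivity
  have hTdeg : (Polynomial.Chebyshev.T ℝ (m+1)).natDegree ≤ m+1 := (chebT_aux m).2.1
  have hTcoeff : (Polynomial.Chebyshev.T ℝ (m+1)).coeff (m+1) = 2^m := (chebT_aux m).2.2
  have hωeval : ∀ k : Fin (m+1), ω.eval (x k) = 0 := by
    intro k
    rw [hω, eval_prod]
    exact Finset.prod_eq_zero (Finset.mem_univ k) (by simp)
  have hTeval : ∀ k : Fin (m+1), (Polynomial.Chebyshev.T ℝ (m+1)).eval (x k) = 0 := by
    intro k
    rw [hxθ k, Polynomial.Chebyshev.T_real_cos (θ k) ((m:ℤ)+1),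
      show (((m:ℤ)+1 : ℤ):ℝ) * θ k = ((m+1:ℕ):ℝ) * θ k by push_cast; ring]
    exact hcosn k
  set q : ℝ[X] := C c * ω - Polynomial.Chebyshev.T ℝ (m+1) with hq
  have hqcoeff : q.coeff (m+1) = 0 := by
    rw [hq, coeff_sub, coeff_C_mul, hTcoeff, ← hωdeg, hωmonic.coeff_natDegree]
    simp [hc]
  have hqdeg : q.natDegree ≤ m+1 := by
    refine le_trans (natDegree_sub_le _ _) (max_le ?_ hTdeg)
    exact le_trans (natDegree_C_mul_le _ _) (le_of_eq hωdeg)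
  have hq0 : q = 0 := by
    rcases eq_or_ne q 0 with h | h
    · exact h
    refine Polynomial.eq_zero_of_natDegree_lt_card_of_eval_eq_zero q hxinj ?_ ?_
    · intro k
      rw [hq, eval_sub, eval_mul, eval_C, hωeval k, hTeval k]
      ring
    · rw [Fintype.card_fin]
      rcases lt_or_eq_of_le hqdeg with h' | h'
      · exact h'
      · exfalso
        apply Polynomial.leadingCoeff_ne_zero.mpr h
        rw [Polynomial.leadingCoeff, h']
        exact hqcoeff
  have hCT : C c * ω = Polynomial.Chebyshev.T ℝ ((m:ℤ)+1) := by
    rw [hq, sub_eq_zero] at hq0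
    exact hq0
  have hkey : ∀ t : ℝ, c * ω.eval (Real.cos t) = Real.cos (((m:ℝ)+1) * t) := by
    intro t
    have h1 : (C c * ω).eval (Real.cos t) = c * ω.eval (Real.cos t) := by simp
    rw [← h1, hCT, Polynomial.Chebyshev.T_real_cos t ((m:ℤ)+1)]
    push_cast
    ring_nf
  -- first derivative identity
  have hD1 : ∀ t : ℝ, (derivative ω).eval (Real.cos t) * (-Real.sin t)
      = c⁻¹ * (-Real.sin (((m:ℝ)+1) * t) * (((m:ℝ)+1))) := by
    intro t
    have hfun : (fun s => ω.eval (Real.cos s)) = (fun s => c⁻¹ * Real.cos (((m:ℝ)+1) * s)) := by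
      funext s
      rw [← hkey s]
      field_simp
    have hd1 : HasDerivAt (fun s => ω.eval (Real.cos s))
        ((derivative ω).eval (Real.cos t) * (-Real.sin t)) t :=
      (ω.hasDerivAt (Real.cos t)).comp t (Real.hasDerivAt_cos t)
    have hlin : HasDerivAt (fun s : ℝ => ((m:ℝ)+1) * s) ((m:ℝ)+1) t := by
      simpa using (hasDerivAt_id t).const_mul ((m:ℝ)+1)
    have hd2 : HasDerivAt (fun s => c⁻¹ * Real.cos (((m:ℝ)+1) * s))
        (c⁻¹ * (-Real.sin (((m:ℝ)+1) * t) * (((m:ℝ)+1)))) t :=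
      ((Real.hasDerivAt_cos (((m:ℝ)+1) * t)).comp t hlin).const_mul c⁻¹
    rw [hfun] at hd1
    exact hd1.unique hd2
  -- second derivative identity
  have hD2 : ∀ t : ℝ, ((derivative (derivative ω)).eval (Real.cos t) * (-Real.sin t)) * (-Real.sin t)
      + (derivative ω).eval (Real.cos t) * (-Real.cos t)
      = c⁻¹ * (-(Real.cos (((m:ℝ)+1) * t) * (((m:ℝ)+1))) * (((m:ℝ)+1))) := by
    intro t
    have hfun : (fun s => (derivative ω).eval (Real.cos s) * (-Real.sin s))
        = (fun s => c⁻¹ * (-Real.sin (((m:ℝ)+1) * s) * (((m:ℝ)+1)))) := funext hD1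
    have hda : HasDerivAt (fun s => (derivative ω).eval (Real.cos s))
        ((derivative (derivative ω)).eval (Real.cos t) * (-Real.sin t)) t :=
      ((derivative ω).hasDerivAt (Real.cos t)).comp t (Real.hasDerivAt_cos t)
    have hdb : HasDerivAt (fun s : ℝ => -Real.sin s) (-Real.cos t) t :=
      (Real.hasDerivAt_sin t).neg
    have hd1 : HasDerivAt (fun s => (derivative ω).eval (Real.cos s) * (-Real.sin s))
        (((derivative (derivative ω)).eval (Real.cos t) * (-Real.sin t)) * (-Real.sin t)
          + (derivative ω).eval (Real.cos t) * (-Real.cos t)) t := hda.mul hdb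
    have hlin : HasDerivAt (fun s : ℝ => ((m:ℝ)+1) * s) ((m:ℝ)+1) t := by
      simpa using (hasDerivAt_id t).const_mul ((m:ℝ)+1)
    have hsin : HasDerivAt (fun s => Real.sin (((m:ℝ)+1) * s))
        (Real.cos (((m:ℝ)+1) * t) * (((m:ℝ)+1))) t :=
      (Real.hasDerivAt_sin (((m:ℝ)+1) * t)).comp t hlin
    have hd2 : HasDerivAt (fun s => c⁻¹ * (-Real.sin (((m:ℝ)+1) * s) * (((m:ℝ)+1))))
        (c⁻¹ * (-(Real.cos (((m:ℝ)+1) * t) * (((m:ℝ)+1))) * (((m:ℝ)+1)))) t :=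
      ((hsin.neg).mul_const (((m:ℝ)+1))).const_mul c⁻¹
    rw [hfun] at hd1
    exact hd1.unique hd2
  -- now finish
  intro k t ht
  set a := x k with ha
  have hcosa : Real.cos (θ k) = a := (hxθ k).symm
  have hmθ : ((m:ℝ)+1) * θ k = ((m+1:ℕ):ℝ) * θ k := by push_cast; ring
  have h1 := hD1 (θ k)
  have h2 := hD2 (θ k)
  rw [hcosa, hmθ] at h1 h2
  set s := Real.sin (θ k) with hs
  have hsin2 : s^2 = 1 - a^2 := by
    have := Real.sin_sq_add_cos_sq (θ k)
    rw [hcosa] at this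
    linarith
  have hsinn2k := hsinn2 k
  have hcosnk := hcosn k
  -- derivative ω nonzero at a, and s ≠ 0
  have hne : (derivative ω).eval a * s ≠ 0 := by
    intro h0
    have : c⁻¹ * (-Real.sin (((m+1:ℕ):ℝ) * θ k) * (((m:ℝ)+1))) = 0 := by
      rw [← h1]; linarith [h0]
    have hc0 : c⁻¹ ≠ 0 := by positivity
    have hm0 : ((m:ℝ)+1) ≠ 0 := by positivity
    have hs0 : Real.sin (((m+1:ℕ):ℝ) * θ k) = 0 := by
      push_cast at this
      have h3 : -Real.sin (((m:ℝ)+1)*θ k) * ((m:ℝ)+1) = 0 := by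
        rcases mul_eq_zero.mp this with h | h
        · exact absurd h hc0
        · exact h
      have h4 : Real.sin (((m:ℝ)+1)*θ k) = 0 := by
        rcases mul_eq_zero.mp h3 with h | h
        · linarith [neg_eq_zero.mp h]
        · exact absurd h hm0
      push_cast
      exact h4
    rw [hs0] at hsinn2k
    norm_num at hsinn2k
  have hD1ne : (derivative ω).eval a ≠ 0 := fun h => hne (by rw [h]; ring)
  have hsne : s ≠ 0 := fun h => hne (by rw [h]; ring)
  have hspos : 0 < 1 - a^2 := by
    rw [← hsin2]; positivity
  -- second derivative relation
  have hrel : (derivative (derivative ω)).eval a * (1 - a^2) = (derivative ω).eval a * a := by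
    rw [hcosnk] at h2
    rw [← hsin2]
    nlinarith [h2]
  have hiter : (derivative^[2] ω) = derivative (derivative ω) := by
    simp [Function.iterate_succ, Function.iterate_one]
  have hratio : (derivative^[2] ω).eval a / (derivative ω).eval a = a / (1 - a^2) := by
    rw [hiter]
    rw [div_eq_div_iff hD1ne (ne_of_gt hspos)]
    linarith [hrel]
  rw [hv, hratio]
  have h1a : -1 ≤ a := by rw [ha, hxθ k]; exact Real.neg_one_le_cos _
  have h2a : a ≤ 1 := by rw [ha, hxθ k]; exact Real.cos_le_one _
  obtain ⟨ht1, ht2⟩ := ht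
  have hval : 1 - (t - a) * (a / (1 - a^2)) = (1 - t*a) / (1 - a^2) := by
    field_simp
    ring
  rw [hval]
  apply div_nonneg _ (le_of_lt hspos)
  nlinarith [(1-t)*(1+a), (1+t)*(1-a)]
end

section
/- With the notation of m-fold barycentric Hermite weights at distinct nodes, for m = 3: w_{k,1} = −(3ω''(x_k)/(2ω'(x_k)))·w_{k,0} and w_{k,2} = (−ω^{(3)}(x_k)/(2ω'(x_k)) + (3/2)(ω''(x_k)/ω'(x_k))²)·w_{k,0}, where w_{k,0} = 1/(ω'(x_k))³. -/
open Polynomial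

/-!
Split off the node: `ω = (X - x_k) ψ` with `ψ = ∏_{j ≠ k} (X - x_j)`, so `ψ(x_k) = ω'(x_k) ≠ 0`,
`ℓ_k = ψ / ψ(x_k)` and `ω^{(j+1)}(x_k) = (j+1) ψ^{(j)}(x_k)`. Since `ℓ_k(x_k) = 1`, the Taylor
coefficients of `ℓ_k³` at `x_k` are `3 ℓ_k'` and `3 ℓ_k'² + (3/2) ℓ_k''`, and the two weights follow
from the recursion by field arithmetic.
-/

namespace Polynomial

variable {R : Type*} [CommRing R]

theorem iterate_derivative_X_sub_C_mul (a : R) (p : R[X]) (j : ℕ) :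
    derivative^[j + 1] ((X - C a) * p) =
      ((j + 1 : ℕ) : R[X]) * derivative^[j] p + (X - C a) * derivative^[j + 1] p := by
  induction j with
  | zero => simp [derivative_mul]
  | succ j ih =>
    rw [Function.iterate_succ_apply', ih, Function.iterate_succ_apply' _ (j + 1)]
    simp only [derivative_add, derivative_mul, derivative_natCast, derivative_X_sub_C,
      Function.iterate_succ_apply']
    push_cast
    ring

theorem eval_iterate_derivative_X_sub_C_mul (a : R) (p : R[X]) (j : ℕ) :
    (derivative^[j + 1] ((X - C a) * p)).eval a = (j + 1) * (derivative^[j] p).eval a := by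
  simp [iterate_derivative_X_sub_C_mul]

theorem eval_derivative_pow_three_of_eval_eq_one {q : R[X]} {a : R} (h : q.eval a = 1) :
    (derivative (q ^ 3)).eval a = 3 * (derivative q).eval a := by
  simp [derivative_pow, h]

theorem eval_iterate_derivative_two_pow_three_of_eval_eq_one {q : R[X]} {a : R}
    (h : q.eval a = 1) :
    (derivative^[2] (q ^ 3)).eval a =
      6 * (derivative q).eval a ^ 2 + 3 * (derivative^[2] q).eval a := by
  have hq : derivative^[2] (q ^ 3) =
      6 * q * derivative q ^ 2 + 3 * q ^ 2 * derivative^[2] q := by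
    simp only [Function.iterate_succ_apply', Function.iterate_zero_apply, derivative_pow,
      derivative_mul, map_natCast]
    norm_num
    ring
  rw [hq]
  simp [h]

end Polynomial

/-- For `m = 3` and distinct nodes, with `w_{k,0} = 1/ω'(x_k)³`,
`b_j = [ℓ_k³]^{(j)}(x_k)/j!`, and the recursion `w_{k,j} = −Σ_{i=0}^{j-1} w_{k,i} b_{j-i}`:
`w_{k,1} = −(3ω''(x_k)/(2ω'(x_k)))·w_{k,0}` and
`w_{k,2} = (−ω'''(x_k)/(2ω'(x_k)) + (3/2)(ω''(x_k)/ω'(x_k))²)·w_{k,0}`. -/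
theorem stmt_17 (n : ℕ) (x : Fin n → ℝ) (hx : Function.Injective x) (k : Fin n)
    (ω : Polynomial ℝ) (hω : ω = ∏ j, (X - C (x j)))
    (ℓk : Polynomial ℝ)
    (hℓ : ℓk = C (((derivative ω).eval (x k))⁻¹) * ∏ j ∈ Finset.univ.erase k, (X - C (x j)))
    (b : ℕ → ℝ)
    (hb : ∀ j, b j = (derivative^[j] (ℓk ^ 3)).eval (x k) / (Nat.factorial j : ℝ))
    (w0 w1 w2 : ℝ)
    (hw0 : w0 = 1 / ((derivative ω).eval (x k)) ^ 3)
    (hw1 : w1 = -(w0 * b 1))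
    (hw2 : w2 = -(w0 * b 2 + w1 * b 1)) :
    w1 = -(3 * (derivative^[2] ω).eval (x k) / (2 * (derivative ω).eval (x k))) * w0 ∧
      w2 = (-((derivative^[3] ω).eval (x k) / (2 * (derivative ω).eval (x k))) +
        (3 / 2) * ((derivative^[2] ω).eval (x k) / (derivative ω).eval (x k)) ^ 2) * w0 := by
  set ψ : ℝ[X] := Lagrange.nodal (Finset.univ.erase k) x
  have hωψ : ω = (X - C (x k)) * ψ := hω ▸ Lagrange.nodal_eq_mul_nodal_erase (Finset.mem_univ k)
  have hψ : ψ.eval (x k) ≠ 0 :=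
    Lagrange.eval_nodal_not_at_node fun j hj => hx.ne (Finset.ne_of_mem_erase hj).symm
  have hω1 : (derivative ω).eval (x k) = ψ.eval (x k) := by
    rw [hωψ, ← Function.iterate_one derivative, eval_iterate_derivative_X_sub_C_mul]
    norm_num
  have hω2 : (derivative^[2] ω).eval (x k) = 2 * (derivative ψ).eval (x k) := by
    rw [hωψ, eval_iterate_derivative_X_sub_C_mul]; norm_num
  have hω3 : (derivative^[3] ω).eval (x k) = 3 * (derivative^[2] ψ).eval (x k) := by
    rw [hωψ, eval_iterate_derivative_X_sub_C_mul]; norm_num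
  have hℓψ (j : ℕ) :
      (derivative^[j] ℓk).eval (x k) = (derivative^[j] ψ).eval (x k) / ψ.eval (x k) := by
    rw [hℓ, hω1, iterate_derivative_C_mul, eval_mul, eval_C, inv_mul_eq_div]
    rfl
  have hℓ1 : ℓk.eval (x k) = 1 := by simpa [hψ] using hℓψ 0
  have hℓ'1 : (derivative ℓk).eval (x k) = (derivative ψ).eval (x k) / ψ.eval (x k) := hℓψ 1
  have hb1 : b 1 = 3 * ((derivative ψ).eval (x k) / ψ.eval (x k)) := by
    rw [hb, Function.iterate_one, eval_derivative_pow_three_of_eval_eq_one hℓ1, hℓ'1]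
    norm_num
  have hb2 : b 2 = 3 * ((derivative ψ).eval (x k) / ψ.eval (x k)) ^ 2 +
      3 / 2 * ((derivative^[2] ψ).eval (x k) / ψ.eval (x k)) := by
    rw [hb, eval_iterate_derivative_two_pow_three_of_eval_eq_one hℓ1, hℓψ 2, hℓ'1]
    norm_num [Nat.factorial]
    ring
  rw [hω1, hω2, hω3]
  constructor
  · rw [hw1, hb1]; ring
  · rw [hw2, hw1, hb1, hb2, hw0]; field_simp; ring
end
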